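/- arXiv:math/0005072 — 2 statements merged into one kernel-verified Lean document; each statement's English description precedes it below -/
import Mathlib

section
/- Let V be a representation of a finite group H over an algebraically closed field K of characteristic zero and H₀ ≤ H a subgroup. If μ(σ,V) ≤ n·μ(σ) for all irreducible representations σ of H₀, then μ(π,V) ≤ n·μ(π) for all irreducible representations π of H. -/
/-- The submodule of `K`-linear maps between two representations which are equivariant. -/
def RepHom {K : Type} [Field K] {G : Type} [Group G]
    {V W : Type} [AddCommGroup V] [Module K V] [AddCommGroup W] [Module K W]
    (ρV : Representation K G V) (ρW : Representation K G W) :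
    Submodule K (V →ₗ[K] W) where
  carrier := {f | ∀ g v, f (ρV g v) = ρW g (f v)}
  add_mem' := by intro f g hf hg x v; simp [hf x v, hg x v]
  zero_mem' := by intro x v; simp
  smul_mem' := by intro c f hf x v; simp [hf x v]

/-- A representation is irreducible if it is nonzero and has no nonzero proper invariant
subspaces. -/
def Representation.IsIrr {K G V : Type} [Field K] [Group G] [AddCommGroup V] [Module K V]
    (ρ : Representation K G V) : Prop :=
  (∃ v : V, v ≠ 0) ∧
    ∀ p : Submodule K V, (∀ g : G, ∀ v ∈ p, ρ g v ∈ p) → p = ⊥ ∨ p = ⊤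

/-- Two representations are isomorphic if there is an equivariant linear equivalence. -/
def RepIsoP {K : Type} [Field K] {G : Type} [Group G]
    {V W : Type} [AddCommGroup V] [Module K V] [AddCommGroup W] [Module K W]
    (ρV : Representation K G V) (ρW : Representation K G W) : Prop :=
  ∃ e : V ≃ₗ[K] W, ∀ g v, e (ρV g v) = ρW g (e v)

section Aux
open Module

variable {K G : Type} [Field K] [Group G]

/-- Restriction of a representation to an invariant submodule. -/
def subrep {W : Type} [AddCommGroup W] [Module K W] (τ : Representation K G W)
    (p : Submodule K W) (hp : ∀ g, ∀ v ∈ p, τ g v ∈ p) : Representation K G p where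
  toFun g := (τ g).restrict (fun x hx => hp g x hx)
  map_one' := by ext x; simp [LinearMap.restrict_apply]
  map_mul' g h := by
    ext x
    simp [LinearMap.restrict_apply, Module.End.mul_apply]

/-- Maschke: an invariant submodule has an invariant complement. -/
theorem maschke_compl {W : Type} [AddCommGroup W] [Module K W] [Finite G] [CharZero K]
    (τ : Representation K G W) (p : Submodule K W) (hp : ∀ g, ∀ v ∈ p, τ g v ∈ p) :
    ∃ q : Submodule K W, IsCompl p q ∧ ∀ g, ∀ v ∈ q, τ g v ∈ q := by
  cases nonempty_fintype G
  obtain ⟨q₀, hq₀⟩ := Submodule.exists_isCompl p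
  set π₀ : W →ₗ[K] W := p.subtype ∘ₗ Submodule.projectionOnto p q₀ hq₀ with hπ₀
  set s : W →ₗ[K] W :=
    (Fintype.card G : K)⁻¹ • ∑ g : G, (τ g) ∘ₗ π₀ ∘ₗ (τ g⁻¹) with hs
  have hcard : (Fintype.card G : K) ≠ 0 := Nat.cast_ne_zero.mpr Fintype.card_ne_zero
  have hπ₀mem : ∀ x, π₀ x ∈ p := fun x => (Submodule.projectionOnto p q₀ hq₀ x).2
  have hπ₀id : ∀ x ∈ p, π₀ x = x := by
    intro x hx
    simp [hπ₀, Submodule.projectionOnto_apply_left hq₀ ⟨x, hx⟩]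
  have hsmem : ∀ x, s x ∈ p := by
    intro x
    simp only [hs, LinearMap.smul_apply, LinearMap.sum_apply, LinearMap.comp_apply]
    exact Submodule.smul_mem _ _ (Submodule.sum_mem _ fun g _ => hp g _ (hπ₀mem _))
  have hsid : ∀ x ∈ p, s x = x := by
    intro x hx
    have : ∀ g : G, τ g (π₀ (τ g⁻¹ x)) = x := by
      intro g
      rw [hπ₀id _ (hp g⁻¹ x hx)]
      have : (τ g * τ g⁻¹) x = x := by rw [← map_mul]; simp
      simpa [Module.End.mul_apply] using this
    simp only [hs, LinearMap.smul_apply, LinearMap.sum_apply, LinearMap.comp_apply, this]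
    rw [Finset.sum_const, Finset.card_univ, ← Nat.cast_smul_eq_nsmul K, smul_smul,
      inv_mul_cancel₀ hcard, one_smul]
  have hsequiv : ∀ h x, s (τ h x) = τ h (s x) := by
    intro h x
    simp only [hs, LinearMap.smul_apply, LinearMap.sum_apply, LinearMap.comp_apply]
    rw [map_smul, map_sum]
    congr 1
    refine Fintype.sum_bijective (fun g => h⁻¹ * g) (Group.mulLeft_bijective h⁻¹) _ _ ?_
    intro g
    have h1 : τ g⁻¹ (τ h x) = τ ((h⁻¹ * g)⁻¹) x := by
      have : (τ g⁻¹ * τ h) x = τ (g⁻¹ * h) x := by rw [← map_mul]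
      simpa [Module.End.mul_apply, mul_inv_rev] using this
    have h2 : ∀ y, τ h (τ (h⁻¹ * g) y) = τ g y := by
      intro y
      have : (τ h * τ (h⁻¹ * g)) y = τ (h * (h⁻¹ * g)) y := by rw [← map_mul]
      simpa [Module.End.mul_apply, mul_assoc] using this
    rw [h1, ← h2]
  refine ⟨LinearMap.ker s, ⟨?_, ?_⟩, ?_⟩
  · rw [Submodule.disjoint_def]
    intro x hxp hxk
    rw [LinearMap.mem_ker] at hxk
    rw [← hsid x hxp, hxk]
  · rw [codisjoint_iff_le_sup]
    intro x _
    have h1 : s x ∈ p := hsmem x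
    have h2 : x - s x ∈ LinearMap.ker s := by
      rw [LinearMap.mem_ker, map_sub, hsid _ h1, sub_self]
    have : x = s x + (x - s x) := by abel
    rw [this]
    exact Submodule.add_mem _ (Submodule.mem_sup_left h1) (Submodule.mem_sup_right h2)
  · intro g v hv
    rw [LinearMap.mem_ker] at hv ⊢
    rw [hsequiv, hv, map_zero]

theorem key {V : Type} [AddCommGroup V] [Module K V] [Finite G] [CharZero K]
    (ρ : Representation K G V) (n : ℕ)
    (hfin : ∀ (Q : Type) [AddCommGroup Q] [Module K Q] [FiniteDimensional K Q]
      (σ : Representation K G Q), σ.IsIrr → FiniteDimensional K (RepHom σ ρ))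
    (hμ : ∀ (Q : Type) [AddCommGroup Q] [Module K Q] [FiniteDimensional K Q]
      (σ : Representation K G Q), σ.IsIrr →
      Module.finrank K (RepHom σ ρ) ≤ n * Module.finrank K Q) :
    ∀ (m : ℕ) (W : Type) (_ : AddCommGroup W) (_ : Module K W) (_ : FiniteDimensional K W),
      finrank K W ≤ m → ∀ τ : Representation K G W,
      FiniteDimensional K (RepHom τ ρ) ∧ finrank K (RepHom τ ρ) ≤ n * finrank K W := by
  intro m
  induction m using Nat.strong_induction_on with
  | _ m ih =>
    intro W _ _ _ hle τ
    by_cases h0 : finrank K W = 0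
    · have : Subsingleton W := finrank_zero_iff.mp h0
      have hss : Subsingleton (W →ₗ[K] V) :=
        ⟨fun f g => by ext v; rw [Subsingleton.elim v 0]; simp⟩
      have hss2 : Subsingleton (RepHom τ ρ) := ⟨fun a b => Subtype.ext (Subsingleton.elim _ _)⟩
      refine ⟨?_, ?_⟩
      · exact FiniteDimensional.of_rank_eq_zero (rank_subsingleton' _ _)
      · rw [h0, Nat.mul_zero, Nat.le_zero]
        have : Module.rank K (RepHom τ ρ) = 0 := rank_subsingleton' _ _
        simp [Module.finrank, this]
    by_cases hirr : τ.IsIrr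
    · exact ⟨hfin W τ hirr, hμ W τ hirr⟩
    · -- not irreducible, nonzero: find proper invariant submodule
      have hex : ∃ v : W, v ≠ 0 := by
        by_contra h
        push_neg at h
        exact h0 (finrank_zero_iff.mpr ⟨fun a b => by rw [h a, h b]⟩)
      rw [Representation.IsIrr, not_and_or] at hirr
      rcases hirr with h | h
      · exact absurd hex h
      push_neg at h
      obtain ⟨p, hpinv, hpbot, hptop⟩ := h
      obtain ⟨q, hcompl, hqinv⟩ := maschke_compl τ p hpinv
      have hqbot : q ≠ ⊥ := by
        rintro rfl
        exact hptop (by simpa using codisjoint_iff_le_sup.mp hcompl.2 |>.antisymm le_top |>.symm)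
      have hrank : finrank K p + finrank K q = finrank K W :=
        Submodule.finrank_add_eq_of_isCompl hcompl
      have hppos : 0 < finrank K p := Submodule.one_le_finrank_iff.mpr hpbot
      have hqpos : 0 < finrank K q := Submodule.one_le_finrank_iff.mpr hqbot
      have hplt : finrank K (↥p) < m := by omega
      have hqlt : finrank K (↥q) < m := by omega
      obtain ⟨hfinp, hμp⟩ := ih _ hplt p _ _ inferInstance le_rfl (subrep τ p hpinv)
      obtain ⟨hfinq, hμq⟩ := ih _ hqlt q _ _ inferInstance le_rfl (subrep τ q hqinv)
      -- restriction map
      set Φ : (RepHom τ ρ) →ₗ[K] (RepHom (subrep τ p hpinv) ρ) × (RepHom (subrep τ q hqinv) ρ) :=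
        { toFun := fun f => (⟨(f : W →ₗ[K] V) ∘ₗ p.subtype, by
              intro g v
              simp [subrep, LinearMap.restrict_apply, f.2 g]⟩,
            ⟨(f : W →ₗ[K] V) ∘ₗ q.subtype, by
              intro g v
              simp [subrep, LinearMap.restrict_apply, f.2 g]⟩)
          map_add' := fun f g => by ext v <;> simp
          map_smul' := fun c f => by ext v <;> simp } with hΦ
      have hinj : Function.Injective Φ := by
        intro f g hfg
        rw [Prod.ext_iff] at hfg
        obtain ⟨h1, h2⟩ := hfg
        apply Subtype.ext
        apply LinearMap.ext
        intro x
        have hx : x ∈ p ⊔ q := codisjoint_iff_le_sup.mp hcompl.2 (Submodule.mem_top)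
        obtain ⟨a, ha, b, hb, rfl⟩ := Submodule.mem_sup.mp hx
        have e1 : (f : W →ₗ[K] V) a = (g : W →ₗ[K] V) a := by
          have := congrArg (fun t => (t : ↥p →ₗ[K] V) ⟨a, ha⟩) (congrArg Subtype.val h1)
          simpa [hΦ] using this
        have e2 : (f : W →ₗ[K] V) b = (g : W →ₗ[K] V) b := by
          have := congrArg (fun t => (t : ↥q →ₗ[K] V) ⟨b, hb⟩) (congrArg Subtype.val h2)
          simpa [hΦ] using this
        simp [map_add, e1, e2]
      haveI : FiniteDimensional K ((RepHom (subrep τ p hpinv) ρ) × (RepHom (subrep τ q hqinv) ρ)) := by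
        infer_instance
      refine ⟨FiniteDimensional.of_injective Φ hinj, ?_⟩
      calc finrank K (RepHom τ ρ)
          ≤ finrank K ((RepHom (subrep τ p hpinv) ρ) × (RepHom (subrep τ q hqinv) ρ)) :=
            LinearMap.finrank_le_finrank_of_injective hinj
        _ = finrank K (RepHom (subrep τ p hpinv) ρ) + finrank K (RepHom (subrep τ q hqinv) ρ) :=
            Module.finrank_prod
        _ ≤ n * finrank K ↥p + n * finrank K ↥q := add_le_add hμp hμq
        _ = n * finrank K W := by rw [← Nat.mul_add, hrank]

end Aux

/-- Let `V` be a representation of a finite group `H` over an algebraically closed field `K` of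
characteristic zero and `H₀ ≤ H` a subgroup, the multiplicities of irreducibles of `H₀` in `V`
being finite.  If `μ(σ,V) ≤ n·μ(σ)` for all irreducible representations `σ` of `H₀` (with
`μ(σ) = dim σ`), then `μ(π,V) ≤ n·μ(π)` for all irreducible representations `π` of `H`. -/
theorem stmt3 {K : Type} [Field K] [IsAlgClosed K] [CharZero K]
    {H : Type} [Group H] [Fintype H] (H₀ : Subgroup H)
    {V : Type} [AddCommGroup V] [Module K V] (ρ : Representation K H V)
    (n : ℕ)
    (hfin : ∀ (Q : Type) [AddCommGroup Q] [Module K Q] [FiniteDimensional K Q]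
      (σ : Representation K H₀ Q), σ.IsIrr →
      FiniteDimensional K (RepHom σ (ρ.comp H₀.subtype)))
    (hμ : ∀ (Q : Type) [AddCommGroup Q] [Module K Q] [FiniteDimensional K Q]
      (σ : Representation K H₀ Q), σ.IsIrr →
      Module.finrank K (RepHom σ (ρ.comp H₀.subtype)) ≤ n * Module.finrank K Q)
    {P : Type} [AddCommGroup P] [Module K P] [FiniteDimensional K P]
    (π : Representation K H P) (hπ : π.IsIrr) :
    Module.finrank K (RepHom π ρ) ≤ n * Module.finrank K P := by
  obtain ⟨hfd, hbound⟩ := key (ρ.comp H₀.subtype) n hfin hμ (Module.finrank K P) P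
    inferInstance inferInstance inferInstance le_rfl (π.comp H₀.subtype)
  have hle : RepHom π ρ ≤ RepHom (π.comp H₀.subtype) (ρ.comp H₀.subtype) := by
    intro f hf g v
    exact hf g v
  calc Module.finrank K (RepHom π ρ)
      ≤ Module.finrank K (RepHom (π.comp H₀.subtype) (ρ.comp H₀.subtype)) :=
        LinearMap.finrank_le_finrank_of_injective (Submodule.inclusion_injective hle)
    _ ≤ n * Module.finrank K P := hbound
end

section
/- Let M be a finitely generated module over a Fréchet algebra D such that for every nonzero m ∈ M there is a linear form ℓ on M with ℓ(m) ≠ 0 and such that λ ↦ ℓ(λ·m') is continuous on D for all m' ∈ M. Then the kernel of any D-module surjection α : D^r → M is closed, and hence M carries a Fréchet topology (the quotient topology) making the D-action continuous. -/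
/-- Let `D` be a Fréchet algebra over a complete nonarchimedean field `K` (e.g. the
distribution algebra of a compact `p`-adic Lie group) and `M` a finitely generated
`D`-module such that the "locally analytic" linear forms (those `ℓ` with `λ ↦ ℓ(λ·m')`
continuous for all `m'`) separate the points of `M`.  Then the kernel of any `D`-module
surjection `α : D^r → M` is closed, and hence the quotient topology on `M` induced by `α`
makes the `D`-module structure (separately) continuous. -/
theorem stmt16 {K : Type} [NontriviallyNormedField K]
    {D : Type} [Ring D] [Algebra K D] [UniformSpace D] [CompleteSpace D]
    [TopologicalSpace.MetrizableSpace D] [IsUniformAddGroup D] [IsTopologicalRing D]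
    {M : Type} [AddCommGroup M] [Module D M] [Module K M] [IsScalarTower K D M]
    [Module.Finite D M]
    (hsep : ∀ m : M, m ≠ 0 → ∃ ℓ : M →ₗ[K] K, ℓ m ≠ 0 ∧
      ∀ m' : M, Continuous fun lam : D => ℓ (lam • m'))
    {r : ℕ} (α : (Fin r → D) →ₗ[D] M) (hα : Function.Surjective α) :
    IsClosed (LinearMap.ker α : Set (Fin r → D)) ∧
      (∀ lam : D, @Continuous M M (TopologicalSpace.coinduced α inferInstance)
        (TopologicalSpace.coinduced α inferInstance) fun m => lam • m) ∧
      (∀ m : M, @Continuous D M _ (TopologicalSpace.coinduced α inferInstance)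
        fun lam : D => lam • m) := by
  -- representation of `α x` as a finite sum
  have hrep : ∀ x : Fin r → D, α x = ∑ i, x i • α (Pi.single i 1) := by
    intro x
    have hx : x = ∑ i, x i • (Pi.single i 1 : Fin r → D) := by
      ext j
      simp [Pi.single_apply, mul_ite, Finset.sum_apply]
    conv_lhs => rw [hx]
    simp [map_sum]
  refine ⟨?_, ?_, ?_⟩
  · -- kernel is closed
    have key : (LinearMap.ker α : Set (Fin r → D)) =
        ⋂ ℓ ∈ {ℓ : M →ₗ[K] K | ∀ m' : M, Continuous fun lam : D => ℓ (lam • m')},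
          {x : Fin r → D | ℓ (α x) = 0} := by
      ext x
      simp only [SetLike.mem_coe, LinearMap.mem_ker, Set.mem_iInter, Set.mem_setOf_eq]
      constructor
      · intro h ℓ _
        rw [h, map_zero]
      · intro h
        by_contra hne
        obtain ⟨ℓ, hℓx, hℓc⟩ := hsep (α x) hne
        exact hℓx (h ℓ hℓc)
    rw [key]
    refine isClosed_biInter fun ℓ hℓ => ?_
    have hc : Continuous fun x : Fin r → D => ℓ (α x) := by
      have : (fun x : Fin r → D => ℓ (α x)) =
          fun x => ∑ i, ℓ (x i • α (Pi.single i 1)) := by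
        funext x
        rw [hrep x, map_sum]
      rw [this]
      exact continuous_finset_sum _ fun i _ =>
        (hℓ (α (Pi.single i 1))).comp (continuous_apply i)
    exact isClosed_eq hc continuous_const
  · -- continuity of `lam • ·` on `M` with the coinduced topology
    intro lam
    letI : TopologicalSpace M := TopologicalSpace.coinduced α inferInstance
    refine continuous_coinduced_dom.mpr ?_
    have h1 : (fun m : M => lam • m) ∘ ⇑α = ⇑α ∘ fun x : Fin r → D => lam • x := by
      funext x
      exact (map_smul α lam x).symm
    rw [h1]
    exact continuous_coinduced_rng.comp (continuous_const_smul lam)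
  · -- continuity of `· • m`
    intro m
    letI : TopologicalSpace M := TopologicalSpace.coinduced α inferInstance
    obtain ⟨x₀, rfl⟩ := hα m
    have h2 : (fun lam : D => lam • α x₀) = ⇑α ∘ fun lam : D => lam • x₀ := by
      funext lam
      exact (map_smul α lam x₀).symm
    rw [h2]
    refine continuous_coinduced_rng.comp (continuous_pi fun i => ?_)
    show Continuous fun lam : D => lam * x₀ i
    exact continuous_id.mul continuous_const
end
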